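/- Let R be a finite poset. Then for every finite digraph S: R ⊑_Γ S with respect to the class P of finite posets if and only if #S(G,R) ≤ #S(G,S) for every finite poset G. The same equivalence holds with P replaced by the class P* of finite irreflexive antisymmetric transitive digraphs and R ∈ P*. -/

import Mathlib

/-!
A homomorphism is strict exactly when all its Γ-components are singletons, so a strong Γ-scheme
restricts to an injection `S(G,R) → S(G,S)`.

Conversely, for any target `H` the homomorphisms `G → H` with the same Γ-components as a fixed
`ξ` correspond to the strict homomorphisms `G_ξ → H`. When `R` is a poset, a strict
homomorphism `G_ξ → R` is the same as one from the reflexive-transitive closure of `G_ξ`, and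
that closure is a poset; so the counting hypothesis, applied to it, gives an injection from each
class of `H(G,R)` with prescribed Γ-components into the corresponding class of `H(G,S)`, and these
injections glue to a strong Γ-scheme.
-/

/-- A homomorphism between digraphs `(V, A)` and `(W, B)`:
a map sending every arc to an arc. -/
def IsHom {V W : Type} (A : V → V → Prop) (B : W → W → Prop) (f : V → W) : Prop :=
  ∀ ⦃v w : V⦄, A v w → B (f v) (f w)

/-- A strict homomorphism: a homomorphism mapping proper arcs to proper arcs. -/
def IsStrictHom {V W : Type} (A : V → V → Prop) (B : W → W → Prop) (f : V → W) : Prop :=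
  IsHom A B f ∧ ∀ ⦃v w : V⦄, A v w → v ≠ w → f v ≠ f w

/-- Adjacency in a digraph. -/
def DAdj {V : Type} (A : V → V → Prop) (v w : V) : Prop := A v w ∨ A w v

/-- `v` and `w` are connected in `X`: `v = w` (with `v ∈ X`), or there is a line
`z 0, …, z I` inside `X` connecting them, consecutive members being adjacent. -/
def ConnIn {V : Type} (A : V → V → Prop) (X : Set V) (v w : V) : Prop :=
  ∃ (I : ℕ) (z : ℕ → V), z 0 = v ∧ z I = w ∧ (∀ i ≤ I, z i ∈ X) ∧
    ∀ i < I, DAdj A (z i) (z (i + 1))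

/-- `γ_X(v)`: the set of `w ∈ X` connected with `v` in `X`. -/
def gammaSet {V : Type} (A : V → V → Prop) (X : Set V) (v : V) : Set V :=
  {w | ConnIn A X v w}

/-- `Γ_ξ(v)`: the connectivity component of `v` in the preimage `ξ⁻¹(ξ(v))`. -/
def GammaComp {V W : Type} (A : V → V → Prop) (ξ : V → W) (v : V) : Set V :=
  gammaSet A {u | ξ u = ξ v} v

/-- The set of homomorphisms `H(G,H)` (as a type). -/
def HomSet {V W : Type} (A : V → V → Prop) (B : W → W → Prop) : Type :=
  {f : V → W // IsHom A B f}

/-- The set of strict homomorphisms `S(G,H)` (as a type). -/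
def StrictHomSet {V W : Type} (A : V → V → Prop) (B : W → W → Prop) : Type :=
  {f : V → W // IsStrictHom A B f}

/-- The vertex set of the digraph `G_ξ`: the components `Γ_ξ(v)`, `v ∈ V(G)`. -/
def GVert {V W : Type} (A : V → V → Prop) (ξ : V → W) : Type :=
  {C : Set V // ∃ v, C = GammaComp A ξ v}

/-- The arc relation of the digraph `G_ξ`. -/
def GArc {V W : Type} (A : V → V → Prop) (ξ : V → W) :
    GVert A ξ → GVert A ξ → Prop :=
  fun C D => ∃ a ∈ C.1, ∃ b ∈ D.1, A a b

/-- The canonical map `π_ξ : G → G_ξ`, `v ↦ Γ_ξ(v)`. -/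
def piMap {V W : Type} (A : V → V → Prop) (ξ : V → W) (v : V) : GVert A ξ :=
  ⟨GammaComp A ξ v, v, rfl⟩

/-- `Θ_{G,H'}(ξ)`: the homomorphisms `ζ : G → H'` with `G_ζ = G_ξ`
(equality of the digraphs `G_ζ` and `G_ξ`, i.e. of their vertex sets,
which determines the arc sets). -/
def ThetaSet {V W W' : Type} (A : V → V → Prop) (B' : W' → W' → Prop)
    (ξ : V → W) : Set (V → W') :=
  {ζ | IsHom A B' ζ ∧
    {C : Set V | ∃ v, C = GammaComp A ζ v} = {C : Set V | ∃ v, C = GammaComp A ξ v}}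

/-- `R ⊑_Γ S` with respect to a class `D'` of finite digraphs: a strong Γ-scheme
from `R` to `S` exists, i.e. for every finite digraph `G ∈ D'` an injective map
`ρ_G : H(G,R) → H(G,S)` with `Γ_{ρ_G(ξ)}(v) = Γ_ξ(v)` for all `ξ`, `v`. -/
def SqGamma (D' : (V : Type) → (V → V → Prop) → Prop)
    {VR VS : Type} (R : VR → VR → Prop) (S : VS → VS → Prop) : Prop :=
  ∀ (V : Type) [Finite V] [Nonempty V] (A : V → V → Prop), D' V A →
    ∃ ρ : HomSet A R → HomSet A S, Function.Injective ρ ∧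
      ∀ (ξ : HomSet A R) (v : V), GammaComp A (ρ ξ).1 v = GammaComp A ξ.1 v

/-- The class `T_a`: digraphs whose loop-removed digraph is acyclic,
i.e. every closed walk is trivial. -/
def Ta {V : Type} (A : V → V → Prop) : Prop :=
  ∀ (z : ℕ → V) (I : ℕ), 0 < I →
    (∀ i < I, A (z i) (z (i + 1)) ∧ z i ≠ z (i + 1)) → z 0 ≠ z I

/-- A poset: a reflexive, antisymmetric, transitive digraph. -/
def IsPosetRel {V : Type} (A : V → V → Prop) : Prop :=
  Reflexive A ∧ AntiSymmetric A ∧ Transitive A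

/-- An element of `P^*`: an irreflexive, antisymmetric, transitive digraph. -/
def IsStrictPosetRel {V : Type} (A : V → V → Prop) : Prop :=
  Irreflexive A ∧ AntiSymmetric A ∧ Transitive A

/-- The direct (disjoint) sum of two digraphs. -/
def sumRel {V W : Type} (A : V → V → Prop) (B : W → W → Prop) :
    V ⊕ W → V ⊕ W → Prop
  | Sum.inl v, Sum.inl w => A v w
  | Sum.inr v, Sum.inr w => B v w
  | _, _ => False

/-- The open neighborhood `N(v)`. -/
def Nbr {Z : Type} (A : Z → Z → Prop) (v : Z) : Set Z :=
  {w | w ≠ v ∧ (A v w ∨ A w v)}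

/-- The in-neighborhood `N^in(v)`. -/
def NIn {Z : Type} (A : Z → Z → Prop) (v : Z) : Set Z :=
  {w | w ≠ v ∧ A w v}

/-- The out-neighborhood `N^out(v)`. -/
def NOut {Z : Type} (A : Z → Z → Prop) (v : Z) : Set Z :=
  {w | w ≠ v ∧ A v w}

/-- `A_r`: the arcs of `R` minus all arcs between `M` and `X`. -/
def ArRel {Z : Type} (A : Z → Z → Prop) (X M : Set Z) : Z → Z → Prop :=
  fun v w => A v w ∧ ¬(v ∈ M ∧ w ∈ X) ∧ ¬(v ∈ X ∧ w ∈ M)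

/-- `A_d = { m β(x) : m x ∈ A(R) ∩ (M × X) }`. -/
def AdRel {Z : Type} (A : Z → Z → Prop) (X M : Set Z) (β : Z → Z) : Z → Z → Prop :=
  fun v w => v ∈ M ∧ ∃ x ∈ X, A v x ∧ w = β x

/-- `A_u = { β(x) m : x m ∈ A(R) ∩ (X × M) }`. -/
def AuRel {Z : Type} (A : Z → Z → Prop) (X M : Set Z) (β : Z → Z) : Z → Z → Prop :=
  fun v w => w ∈ M ∧ ∃ x ∈ X, A x w ∧ v = β x

/-- The rearranged digraph `S`, with `A(S) = A_r ∪ A_d ∪ A_u`. -/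
def SRel {Z : Type} (A : Z → Z → Prop) (X M : Set Z) (β : Z → Z) : Z → Z → Prop :=
  fun v w => ArRel A X M v w ∨ AdRel A X M β v w ∨ AuRel A X M β v w

/-- `U_ξ = { v : ξ(v) ∈ T and ξ[N_G(v)] ∩ M ≠ ∅ }` (for `T = X`; with `T = Y`
this gives `U'_ζ`). -/
def USet {V Z : Type} (AG : V → V → Prop) (T M : Set Z) (ξ : V → Z) : Set V :=
  {v | ξ v ∈ T ∧ ∃ w ∈ Nbr AG v, ξ w ∈ M}

open Classical in
/-- The rearranged homomorphism `ρ_G(ξ)`: `β(ξ(v))` on `U_ξ` and `ξ(v)` elsewhere. -/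
noncomputable def rhoMap {V Z : Type} (AG : V → V → Prop) (X M : Set Z) (β : Z → Z)
    (ξ : V → Z) : V → Z :=
  fun v => if v ∈ USet AG X M ξ then β (ξ v) else ξ v

instance {V W : Type} [Finite V] [Finite W] (A : V → V → Prop) (B : W → W → Prop) :
    Finite (HomSet A B) :=
  inferInstanceAs (Finite {f : V → W // IsHom A B f})

instance {V W : Type} [Finite V] [Finite W] (A : V → V → Prop) (B : W → W → Prop) :
    Finite (StrictHomSet A B) :=
  inferInstanceAs (Finite {f : V → W // IsStrictHom A B f})

instance {V W : Type} [Finite V] (A : V → V → Prop) (ξ : V → W) : Finite (GVert A ξ) :=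
  inferInstanceAs (Finite {C : Set V // ∃ v, C = GammaComp A ξ v})

instance {V W : Type} [Nonempty V] (A : V → V → Prop) (ξ : V → W) : Nonempty (GVert A ξ) :=
  ⟨piMap A ξ (Classical.arbitrary V)⟩

def StrictHomCardLE (D' : (V : Type) → (V → V → Prop) → Prop)
    {VR VS : Type} (R : VR → VR → Prop) (S : VS → VS → Prop) : Prop :=
  ∀ (V : Type) [Finite V] [Nonempty V] (A : V → V → Prop), D' V A →
    Nat.card (StrictHomSet A R) ≤ Nat.card (StrictHomSet A S)

lemma exists_injective_of_natCard_le {α β : Type*} [Finite α] [Finite β]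
    (h : Nat.card α ≤ Nat.card β) : ∃ f : α → β, Function.Injective f := by
  have := Fintype.ofFinite α
  have := Fintype.ofFinite β
  rw [Nat.card_eq_fintype_card, Nat.card_eq_fintype_card] at h
  obtain ⟨f⟩ := Function.Embedding.nonempty_of_card_le h
  exact ⟨f, f.injective⟩

lemma exists_injective_fiberwise {α β γ : Type*} (f : α → γ) (g : β → γ)
    (h : ∀ c, ∃ F : {a // f a = c} → {b // g b = c}, Function.Injective F) :
    ∃ F : α → β, Function.Injective F ∧ ∀ a, g (F a) = f a := by
  choose F hF using h
  refine ⟨fun a => (F (f a) ⟨a, rfl⟩).1, ?_, fun a => (F (f a) ⟨a, rfl⟩).2⟩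
  exact (Equiv.sigmaFiberEquiv g).injective.comp
    ((Function.injective_id.sigma_map hF).comp (Equiv.sigmaFiberEquiv f).symm.injective)

section GammaComp

variable {V W W' : Type} {A : V → V → Prop}

lemma mem_gammaComp_iff {ξ : V → W} {v w : V} :
    w ∈ GammaComp A ξ v ↔
      Relation.ReflTransGen (fun a b => DAdj A a b ∧ ξ a = ξ b) v w := by
  constructor
  · rintro ⟨I, z, rfl, rfl, hmem, hadj⟩
    suffices ∀ i ≤ I, Relation.ReflTransGen (fun a b => DAdj A a b ∧ ξ a = ξ b) (z 0) (z i) from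
      this I le_rfl
    intro i hi
    induction i with
    | zero => exact .refl
    | succ n ih =>
      exact (ih (by omega)).tail
        ⟨hadj n (by omega), (hmem n (by omega)).trans (hmem (n + 1) hi).symm⟩
  · intro h
    induction h with
    | refl => exact ⟨0, fun _ => v, rfl, rfl, fun _ _ => rfl, fun i hi => absurd hi i.not_lt_zero⟩
    | @tail b c _ hbc ih =>
      obtain ⟨I, z, h0, hI, hmem, hadj⟩ := ih
      have hzI : ∀ i ≤ I, Function.update z (I + 1) c i = z i :=
        fun i hi => Function.update_of_ne (by omega) _ _
      refine ⟨I + 1, Function.update z (I + 1) c, by rw [hzI 0 I.zero_le, h0],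
        Function.update_self .., fun i hi => ?_, fun i hi => ?_⟩
      · rcases Nat.lt_or_ge I i with hIi | hiI
        · rw [show i = I + 1 by omega, Function.update_self]
          exact hbc.2.symm.trans (hI ▸ hmem I le_rfl)
        · rw [hzI i hiI]; exact hmem i hiI
      · rcases Nat.lt_or_ge i I with hiI | hIi
        · rw [hzI i hiI.le, hzI (i + 1) hiI]; exact hadj i hiI
        · rw [show i = I by omega, hzI I le_rfl, Function.update_self, hI]; exact hbc.1

lemma mem_gammaComp_self (ξ : V → W) (v : V) : v ∈ GammaComp A ξ v :=
  mem_gammaComp_iff.2 .refl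

lemma eq_of_mem_gammaComp {ξ : V → W} {v w : V} (h : w ∈ GammaComp A ξ v) : ξ w = ξ v := by
  obtain ⟨I, z, -, rfl, hmem, -⟩ := h
  exact hmem I le_rfl

lemma mem_gammaComp_of_adj {ξ : V → W} {a b : V} (hab : A a b) (h : ξ a = ξ b) :
    b ∈ GammaComp A ξ a :=
  mem_gammaComp_iff.2 (.single ⟨.inl hab, h⟩)

lemma gammaComp_eq_of_mem {ξ : V → W} {v w : V} (h : w ∈ GammaComp A ξ v) :
    GammaComp A ξ w = GammaComp A ξ v := by
  have hvw := mem_gammaComp_iff.1 h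
  have hwv : Relation.ReflTransGen (fun a b => DAdj A a b ∧ ξ a = ξ b) w v := by
    refine Relation.ReflTransGen.mono ?_ _ _ (Relation.reflTransGen_swap.2 hvw)
    exact fun _ _ ⟨hab, e⟩ => ⟨Or.symm hab, e.symm⟩
  ext u
  simp only [mem_gammaComp_iff]
  exact ⟨hvw.trans, hwv.trans⟩

lemma mem_gammaComp_iff_gammaComp_eq {ξ : V → W} {v w : V} :
    w ∈ GammaComp A ξ v ↔ GammaComp A ξ w = GammaComp A ξ v :=
  ⟨gammaComp_eq_of_mem, fun h => h ▸ mem_gammaComp_self ξ w⟩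

lemma eq_of_gammaComp_eq {ξ : V → W} {v w : V} (h : GammaComp A ξ w = GammaComp A ξ v) :
    ξ w = ξ v :=
  eq_of_mem_gammaComp (mem_gammaComp_iff_gammaComp_eq.2 h)

lemma gammaComp_subset_of_adj {ξ : V → W} {η : V → W'}
    (h : ∀ ⦃a b⦄, A a b → η a = η b → ξ a = ξ b) (v : V) :
    GammaComp A η v ⊆ GammaComp A ξ v := by
  intro w hw
  refine mem_gammaComp_iff.2 (Relation.ReflTransGen.mono ?_ _ _ (mem_gammaComp_iff.1 hw))
  exact fun a b ⟨hab, e⟩ => ⟨hab, hab.elim (fun h' => h h' e) (fun h' => (h h' e.symm).symm)⟩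

lemma gammaComp_eq_singleton_iff {ξ : V → W} :
    (∀ v, GammaComp A ξ v = {v}) ↔ ∀ ⦃a b⦄, A a b → a ≠ b → ξ a ≠ ξ b := by
  constructor
  · intro h a b hab hne e
    have hb := mem_gammaComp_of_adj hab e
    rw [h a] at hb
    exact hne hb.symm
  · intro h v
    refine Set.Subset.antisymm (fun w hw => ?_) (by simpa using mem_gammaComp_self ξ v)
    have hsub := gammaComp_subset_of_adj (ξ := id)
      (fun a b hab e => not_not.1 fun hne => h hab hne e) v
    exact eq_of_mem_gammaComp (hsub hw)

lemma isStrictHom_iff_gammaComp_eq_singleton {B : W → W → Prop} {ξ : V → W} :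
    IsStrictHom A B ξ ↔ IsHom A B ξ ∧ ∀ v, GammaComp A ξ v = {v} := by
  rw [gammaComp_eq_singleton_iff]
  rfl

lemma IsHom.isStrictHom_of_irreflexive {B : W → W → Prop} {ξ : V → W} (hB : Irreflexive B)
    (hξ : IsHom A B ξ) : IsStrictHom A B ξ :=
  ⟨hξ, fun _ _ hab _ e => hB _ (e ▸ hξ hab)⟩

end GammaComp

section Quotient

variable {V W W' : Type} {A : V → V → Prop} {ξ : V → W}

lemma piMap_surjective : Function.Surjective (piMap A ξ) := by
  rintro ⟨C, v, rfl⟩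
  exact ⟨v, rfl⟩

lemma piMap_eq_piMap_iff {a b : V} :
    piMap A ξ a = piMap A ξ b ↔ GammaComp A ξ a = GammaComp A ξ b :=
  Subtype.ext_iff

lemma mem_iff_piMap_eq {a : V} (C : GVert A ξ) : a ∈ C.1 ↔ piMap A ξ a = C := by
  obtain ⟨C, v, rfl⟩ := C
  exact mem_gammaComp_iff_gammaComp_eq.trans piMap_eq_piMap_iff.symm

lemma gArc_iff {C D : GVert A ξ} :
    GArc A ξ C D ↔ ∃ a b, A a b ∧ piMap A ξ a = C ∧ piMap A ξ b = D := by
  simp only [GArc, mem_iff_piMap_eq]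
  aesop

lemma isStrictHom_gArc_iff {B : W' → W' → Prop} {g : GVert A ξ → W'} :
    IsStrictHom (GArc A ξ) B g ↔ IsHom A B (g ∘ piMap A ξ) ∧
      ∀ ⦃a b⦄, A a b → GammaComp A ξ a ≠ GammaComp A ξ b →
        g (piMap A ξ a) ≠ g (piMap A ξ b) := by
  constructor
  · rintro ⟨hom, strict⟩
    exact ⟨fun a b hab => hom (gArc_iff.2 ⟨a, b, hab, rfl, rfl⟩), fun a b hab hne =>
      strict (gArc_iff.2 ⟨a, b, hab, rfl, rfl⟩) (mt piMap_eq_piMap_iff.1 hne)⟩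
  · rintro ⟨hom, strict⟩
    refine ⟨fun C D hCD => ?_, fun C D hCD hne => ?_⟩ <;>
      obtain ⟨a, b, hab, rfl, rfl⟩ := gArc_iff.1 hCD
    · exact hom hab
    · exact strict hab (mt piMap_eq_piMap_iff.2 hne)

lemma gammaComp_comp_piMap {g : GVert A ξ → W'}
    (hg : ∀ ⦃a b⦄, A a b → GammaComp A ξ a ≠ GammaComp A ξ b →
      g (piMap A ξ a) ≠ g (piMap A ξ b)) :
    GammaComp A (g ∘ piMap A ξ) = GammaComp A ξ := by
  funext v
  refine Set.Subset.antisymm (gammaComp_subset_of_adj (fun a b hab e => ?_) v)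
    (gammaComp_subset_of_adj (fun a b hab e => ?_) v)
  · exact eq_of_gammaComp_eq (not_not.1 fun hne => hg hab hne e).symm |>.symm
  · exact congrArg g (piMap_eq_piMap_iff.2 (gammaComp_eq_of_mem (mem_gammaComp_of_adj hab e)).symm)

noncomputable def strictHomGArcEquiv (A : V → V → Prop) (ξ : V → W) (B : W' → W' → Prop) :
    StrictHomSet (GArc A ξ) B ≃ {η : HomSet A B // GammaComp A η.1 = GammaComp A ξ} :=
  Equiv.ofBijective
    (fun g => ⟨⟨g.1 ∘ piMap A ξ, (isStrictHom_gArc_iff.1 g.2).1⟩,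
      gammaComp_comp_piMap (isStrictHom_gArc_iff.1 g.2).2⟩)
    ⟨fun g g' h => Subtype.ext (piMap_surjective.injective_comp_right
        (congrArg (fun η : {η : HomSet A B // _} => η.1.1) h)), by
      rintro ⟨⟨η, hη⟩, hΓ⟩
      have hfac : η ∘ Function.surjInv piMap_surjective ∘ piMap A ξ = η := by
        funext v
        have hv : piMap A ξ (Function.surjInv piMap_surjective (piMap A ξ v)) = piMap A ξ v :=
          Function.surjInv_eq _ _
        rw [piMap_eq_piMap_iff, ← hΓ] at hv
        exact eq_of_gammaComp_eq hv
      refine ⟨⟨η ∘ Function.surjInv piMap_surjective, isStrictHom_gArc_iff.2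
        ⟨by rwa [Function.comp_assoc, hfac], fun a b hab hne e => hne ?_⟩⟩,
        Subtype.ext (Subtype.ext hfac)⟩
      have e' : η a = η b := by rw [← congrFun hfac a, ← congrFun hfac b]; exact e
      rw [← hΓ, ← gammaComp_eq_of_mem (mem_gammaComp_of_adj hab e')]⟩

end Quotient

section ReflTransGen

variable {α VR W : Type} {Q : α → α → Prop} {R : VR → VR → Prop}

lemma IsPosetRel.isHom_reflTransGen (hR : IsPosetRel R) {f : α → VR} (hf : IsHom Q R f) :
    IsHom (Relation.ReflTransGen Q) R f := by
  intro a b h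
  induction h with
  | refl => exact hR.1 _
  | tail _ hbc ih => exact hR.2.2 ih (hf hbc)

lemma IsPosetRel.eq_of_reflTransGen (hR : IsPosetRel R) {f : α → VR} (hf : IsStrictHom Q R f)
    {a b : α} (h : Relation.ReflTransGen Q a b) (e : f a = f b) : a = b := by
  induction h with
  | refl => rfl
  | @tail b c hab hbc ih =>
    have hfab : R (f a) (f b) := hR.isHom_reflTransGen hf.1 hab
    have hfbc : f b = f c := hR.2.1 (hf.1 hbc) (e ▸ hfab)
    obtain rfl := ih (e.trans hfbc.symm)
    exact not_not.1 fun hne => hf.2 hbc hne hfbc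

lemma IsStrictHom.of_reflTransGen {B : W → W → Prop} {f : α → W}
    (hf : IsStrictHom (Relation.ReflTransGen Q) B f) : IsStrictHom Q B f :=
  ⟨fun _ _ h => hf.1 (.single h), fun _ _ h => hf.2 (.single h)⟩

lemma IsPosetRel.isStrictHom_reflTransGen_iff (hR : IsPosetRel R) {f : α → VR} :
    IsStrictHom (Relation.ReflTransGen Q) R f ↔ IsStrictHom Q R f :=
  ⟨IsStrictHom.of_reflTransGen, fun hf =>
    ⟨hR.isHom_reflTransGen hf.1, fun _ _ h hne e => hne (hR.eq_of_reflTransGen hf h e)⟩⟩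

lemma IsPosetRel.reflTransGen (hR : IsPosetRel R) {f : α → VR} (hf : IsStrictHom Q R f) :
    IsPosetRel (Relation.ReflTransGen Q) :=
  ⟨fun _ => .refl,
    fun _ _ hab hba => hR.eq_of_reflTransGen hf hab
      (hR.2.1 (hR.isHom_reflTransGen hf.1 hab) (hR.isHom_reflTransGen hf.1 hba)),
    fun _ _ _ => Relation.ReflTransGen.trans⟩

lemma StrictHomCardLE.natCard_le_of_isStrictHom {VS : Type} [Finite α] [Nonempty α] [Finite VS]
    {S : VS → VS → Prop} (hR : IsPosetRel R) (h : StrictHomCardLE (fun _ A => IsPosetRel A) R S)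
    {f : α → VR} (hf : IsStrictHom Q R f) :
    Nat.card (StrictHomSet Q R) ≤ Nat.card (StrictHomSet Q S) :=
  calc Nat.card (StrictHomSet Q R)
      = Nat.card (StrictHomSet (Relation.ReflTransGen Q) R) :=
        Nat.card_congr (Equiv.subtypeEquivRight fun _ => hR.isStrictHom_reflTransGen_iff.symm)
    _ ≤ Nat.card (StrictHomSet (Relation.ReflTransGen Q) S) := h α _ (hR.reflTransGen hf)
    _ ≤ Nat.card (StrictHomSet Q S) :=
        Nat.card_le_card_of_injective (Subtype.map id fun _ => IsStrictHom.of_reflTransGen)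
          (Subtype.map_injective _ Function.injective_id)

end ReflTransGen

section Scheme

variable {VR VS : Type} {R : VR → VR → Prop} {S : VS → VS → Prop}

lemma natCard_strictHomSet_le_of_gammaScheme {V : Type} [Finite V] [Finite VS]
    {A : V → V → Prop} (ρ : HomSet A R → HomSet A S) (hρ : Function.Injective ρ)
    (hΓ : ∀ ξ v, GammaComp A (ρ ξ).1 v = GammaComp A ξ.1 v) :
    Nat.card (StrictHomSet A R) ≤ Nat.card (StrictHomSet A S) := by
  have hstrict (ξ : StrictHomSet A R) : IsStrictHom A S (ρ ⟨ξ.1, ξ.2.1⟩).1 := by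
    have hξ := isStrictHom_iff_gammaComp_eq_singleton.1 ξ.2
    exact isStrictHom_iff_gammaComp_eq_singleton.2
      ⟨(ρ _).2, fun v => (hΓ _ v).trans (hξ.2 v)⟩
  refine Nat.card_le_card_of_injective (fun ξ => ⟨_, hstrict ξ⟩) fun ξ ξ' e => ?_
  have := hρ (Subtype.ext (congrArg (fun η : StrictHomSet A S => η.1) e))
  exact Subtype.ext (congrArg (fun η : HomSet A R => η.1) this)

lemma SqGamma.strictHomCardLE [Finite VS] {D' : (V : Type) → (V → V → Prop) → Prop}
    (h : SqGamma D' R S) : StrictHomCardLE D' R S := by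
  intro V _ _ A hA
  obtain ⟨ρ, hρ, hΓ⟩ := h V A hA
  exact natCard_strictHomSet_le_of_gammaScheme ρ hρ hΓ

lemma StrictHomCardLE.natCard_fiber_le [Finite VR] [Finite VS] (hR : IsPosetRel R)
    (h : StrictHomCardLE (fun _ A => IsPosetRel A) R S) {V : Type} [Finite V] [Nonempty V]
    (A : V → V → Prop) (c : V → Set V) :
    Nat.card {ξ : HomSet A R // GammaComp A ξ.1 = c} ≤
      Nat.card {η : HomSet A S // GammaComp A η.1 = c} := by
  rcases isEmpty_or_nonempty {ξ : HomSet A R // GammaComp A ξ.1 = c} with _ | ⟨ξ, rfl⟩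
  · simp
  rw [← Nat.card_congr (strictHomGArcEquiv A ξ.1 R),
    ← Nat.card_congr (strictHomGArcEquiv A ξ.1 S)]
  exact h.natCard_le_of_isStrictHom hR ((strictHomGArcEquiv A ξ.1 R).symm ⟨ξ, rfl⟩).2

lemma StrictHomCardLE.sqGamma_of_isPosetRel [Finite VR] [Finite VS] (hR : IsPosetRel R)
    (h : StrictHomCardLE (fun _ A => IsPosetRel A) R S) :
    SqGamma (fun _ A => IsPosetRel A) R S := by
  intro V _ _ A _
  obtain ⟨ρ, hρ, hΓ⟩ := exists_injective_fiberwise (fun ξ : HomSet A R => GammaComp A ξ.1)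
    (fun η : HomSet A S => GammaComp A η.1)
    fun c => exists_injective_of_natCard_le (h.natCard_fiber_le hR A c)
  exact ⟨ρ, hρ, fun ξ => congrFun (hΓ ξ)⟩

/-- Into an irreflexive `R` every homomorphism is strict, so all Γ-components are singletons
on both sides and any injection `S(G,R) → S(G,S)` is a strong Γ-scheme. -/
lemma StrictHomCardLE.sqGamma_of_irreflexive [Finite VR] [Finite VS]
    {D' : (V : Type) → (V → V → Prop) → Prop} (hR : Irreflexive R) (h : StrictHomCardLE D' R S) :
    SqGamma D' R S := by
  intro V _ _ A hA
  obtain ⟨F, hF⟩ := exists_injective_of_natCard_le (h V A hA)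
  let toStrict (ξ : HomSet A R) : StrictHomSet A R := ⟨ξ.1, ξ.2.isStrictHom_of_irreflexive hR⟩
  refine ⟨fun ξ => ⟨(F (toStrict ξ)).1, (F (toStrict ξ)).2.1⟩, fun ξ ξ' e => ?_, fun ξ v => ?_⟩
  · have := hF (Subtype.ext (congrArg (fun η : HomSet A S => η.1) e))
    exact Subtype.ext (congrArg (fun η : StrictHomSet A R => η.1) this)
  · rw [(isStrictHom_iff_gammaComp_eq_singleton.1 (F (toStrict ξ)).2).2 v,
      (isStrictHom_iff_gammaComp_eq_singleton.1 (toStrict ξ).2).2 v]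

end Scheme

theorem stmt11_general {VR VS : Type} [Finite VR] [Finite VS]
    (R : VR → VR → Prop) (S : VS → VS → Prop) :
    (IsPosetRel R →
      (SqGamma (fun _ A => IsPosetRel A) R S ↔
        ∀ (V : Type) [Finite V] [Nonempty V] (A : V → V → Prop), IsPosetRel A →
          Nat.card (StrictHomSet A R) ≤ Nat.card (StrictHomSet A S))) ∧
    (IsStrictPosetRel R →
      (SqGamma (fun _ A => IsStrictPosetRel A) R S ↔
        ∀ (V : Type) [Finite V] [Nonempty V] (A : V → V → Prop), IsStrictPosetRel A →
          Nat.card (StrictHomSet A R) ≤ Nat.card (StrictHomSet A S))) :=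
  ⟨fun hR => ⟨SqGamma.strictHomCardLE, StrictHomCardLE.sqGamma_of_isPosetRel hR⟩,
    fun hR => ⟨SqGamma.strictHomCardLE, StrictHomCardLE.sqGamma_of_irreflexive hR.1⟩⟩

/-- For a finite poset `R` and every finite digraph `S`: `R ⊑_Γ S` with respect
to the class `P` of finite posets iff `#S(G,R) ≤ #S(G,S)` for every finite poset
`G`; and the same with `P` replaced by the class `P*` of finite irreflexive
antisymmetric transitive digraphs (and `R ∈ P*`). -/
theorem stmt11 {VR VS : Type} [Finite VR] [Nonempty VR] [Finite VS] [Nonempty VS]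
    (R : VR → VR → Prop) (S : VS → VS → Prop) :
    (IsPosetRel R →
      (SqGamma (fun _ A => IsPosetRel A) R S ↔
        ∀ (V : Type) [Finite V] [Nonempty V] (A : V → V → Prop), IsPosetRel A →
          Nat.card (StrictHomSet A R) ≤ Nat.card (StrictHomSet A S))) ∧
    (IsStrictPosetRel R →
      (SqGamma (fun _ A => IsStrictPosetRel A) R S ↔
        ∀ (V : Type) [Finite V] [Nonempty V] (A : V → V → Prop), IsStrictPosetRel A →
          Nat.card (StrictHomSet A R) ≤ Nat.card (StrictHomSet A S))) :=
  stmt11_general R S
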